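/- Let A, B ∈ T^m(ℝⁿ) and ξ ∈ ℝⁿ. Suppose x ∈ ℝⁿ with xᵀx = 1 satisfies a(x)_i b(x)_j − b(x)_i a(x)_j = 0 for all 1 ≤ i < j ≤ n, x ≥ 0, ξᵀ b(x) > 0, and ξᵀa(x)·B x^{m−1} − ξᵀb(x)·A x^{m−1} ≥ 0, where a(x) = x ∘ A x^{m−1} and b(x) = x ∘ B x^{m−1}. Then (λ, x) with λ = ξᵀa(x)/ξᵀb(x) is a C-eigenpair of (A,B). -/
import Mathlib


open Finset

/-- `(A x^{m-1})_i` for an (m+1)-th order n-dimensional real tensor `A`. -/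
def tvec {n m : ℕ} (A : (Fin (m + 1) → Fin n) → ℝ) (x : Fin n → ℝ) (i : Fin n) : ℝ :=
  ∑ g : Fin m → Fin n, A (Fin.cons i g) * ∏ j, x (g j)

/-- `A x^m` for an m-th order n-dimensional real tensor `A`. -/
def tscal {n m : ℕ} (A : (Fin m → Fin n) → ℝ) (x : Fin n → ℝ) : ℝ :=
  ∑ f : Fin m → Fin n, A f * ∏ j, x (f j)

/-- `(λ, x)` is a complementarity eigenpair (C-eigenpair) of `(A, B)`:
`x ≠ 0` and `0 ≤ x ⊥ (λ B x^{m-1} - A x^{m-1}) ≥ 0`. -/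
def CEig {n m : ℕ} (A B : (Fin (m + 1) → Fin n) → ℝ) (lam : ℝ) (x : Fin n → ℝ) : Prop :=
  x ≠ 0 ∧ (∀ i, 0 ≤ x i) ∧ (∀ i, 0 ≤ lam * tvec B x i - tvec A x i) ∧
    ∑ i, x i * (lam * tvec B x i - tvec A x i) = 0

/-- a unit-norm `x` satisfying the system `(5.5)` (case I) together with
`λ = ξᵀ a(x) / ξᵀ b(x)` forms a C-eigenpair of `(A,B)`. -/
theorem stmt_13 {n m : ℕ} (A B : (Fin (m + 1) → Fin n) → ℝ) (xi : Fin n → ℝ)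
    (x : Fin n → ℝ)
    (hnorm : (∑ i, x i * x i) = 1)
    (hminors : ∀ i j : Fin n, i < j →
      (x i * tvec A x i) * (x j * tvec B x j) - (x i * tvec B x i) * (x j * tvec A x j) = 0)
    (hx : ∀ i, 0 ≤ x i)
    (hb : 0 < ∑ i, xi i * (x i * tvec B x i))
    (hineq : ∀ i, 0 ≤ (∑ j, xi j * (x j * tvec A x j)) * tvec B x i
        - (∑ j, xi j * (x j * tvec B x j)) * tvec A x i) :
    CEig A B ((∑ i, xi i * (x i * tvec A x i)) / (∑ i, xi i * (x i * tvec B x i))) x := by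
  set a : Fin n → ℝ := fun i => x i * tvec A x i with ha
  set b : Fin n → ℝ := fun i => x i * tvec B x i with hbdef
  set al := ∑ i, xi i * a i with hal
  set be := ∑ i, xi i * b i with hbe
  have hβ : 0 < be := hb
  have key : ∀ i j : Fin n, a i * b j = b i * a j := by
    intro i j
    rcases lt_trichotomy i j with h | h | h
    · have := hminors i j h; simp only [ha, hbdef]; linarith
    · subst h; ring
    · have := hminors j i h; simp only [ha, hbdef]; linarith
  have hmain : al * ∑ i, b i = be * ∑ i, a i := by
    calc al * ∑ i, b i = ∑ i, ∑ j, xi i * a i * b j := Finset.sum_mul_sum _ _ _ _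
      _ = ∑ i, ∑ j, xi i * b i * a j := by
          refine Finset.sum_congr rfl fun i _ => Finset.sum_congr rfl fun j _ => ?_
          rw [mul_assoc, key i j, ← mul_assoc]
      _ = be * ∑ j, a j := (Finset.sum_mul_sum _ _ _ _).symm
  refine ⟨?_, hx, ?_, ?_⟩
  · intro h
    rw [h] at hnorm
    simp at hnorm
  · intro i
    have h2 : al / be * tvec B x i - tvec A x i
        = (al * tvec B x i - be * tvec A x i) / be := by
      field_simp
    rw [h2]
    exact div_nonneg (hineq i) hβ.le
  · have hsum : ∑ i, x i * (al / be * tvec B x i - tvec A x i)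
        = al / be * (∑ i, b i) - ∑ i, a i := by
      rw [Finset.mul_sum, ← Finset.sum_sub_distrib]
      refine Finset.sum_congr rfl fun i _ => ?_
      simp only [ha, hbdef]; ring
    rw [hsum]
    field_simp
    linarith
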